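/- Let p, q, g be positive integers with gcd(p,q) = 1 and p < q (so that t = p/q ∈ (0,1)). Suppose (i,j) and (i',j') are distinct points in ℤ × ℤ with p·(j - j') = -(2q - p)·(i - i'), |i - j| ≤ g, and |i' - j'| ≤ g. Then q ≤ g if p is odd, and q ≤ 2g if p is even. -/
import Mathlib


theorem stmt10 (p q g : ℕ) (hp : 0 < p) (hq : 0 < q) (hg : 0 < g)
    (hcop : Nat.gcd p q = 1) (hpq : p < q)
    (i j i' j' : ℤ) (hne : (i, j) ≠ (i', j'))
    (hline : (p : ℤ) * (j - j') = -(2 * (q : ℤ) - (p : ℤ)) * (i - i'))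
    (hg1 : |i - j| ≤ (g : ℤ)) (hg2 : |i' - j'| ≤ (g : ℤ)) :
    (Odd p → q ≤ g) ∧ (Even p → q ≤ 2 * g) := by
  set a : ℤ := i - i' with ha
  set b : ℤ := j - j' with hb
  have hpz : (0 : ℤ) < p := by exact_mod_cast hp
  have hqz : (0 : ℤ) < q := by exact_mod_cast hq
  have key : (p : ℤ) * (a - b) = 2 * q * a := by
    have := hline
    nlinarith [hline]
  have hne' : a ≠ 0 := by
    intro h0
    have hb0 : (p : ℤ) * b = 0 := by rw [hline, h0]; ring
    have hb0' : b = 0 := by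
      rcases mul_eq_zero.1 hb0 with h | h
      · exact absurd h hpz.ne'
      · exact h
    apply hne
    have h1 : i = i' := by have := ha; omega
    have h2 : j = j' := by have := hb; omega
    simp [h1, h2]
  have habs : (p : ℤ) * |a - b| = 2 * q * |a| := by
    have h1 : |(p : ℤ) * (a - b)| = |2 * q * a| := by rw [key]
    rw [abs_mul, abs_mul] at h1
    rw [abs_of_pos hpz] at h1
    rw [abs_of_pos (by linarith : (0:ℤ) < 2 * q)] at h1
    exact h1
  have hab2g : |a - b| ≤ 2 * g := by
    have heq : a - b = (i - j) - (i' - j') := by rw [ha, hb]; ring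
    rw [heq]
    calc |(i - j) - (i' - j')| ≤ |i - j| + |i' - j'| := abs_sub _ _
      _ ≤ 2 * g := by linarith
  have hcopz : IsCoprime (p : ℤ) (q : ℤ) := by
    rw [Int.isCoprime_iff_gcd_eq_one]
    exact_mod_cast hcop
  have hdvd2a : (p : ℤ) ∣ 2 * a := by
    apply hcopz.dvd_of_dvd_mul_left
    exact ⟨a - b, by linarith [key]⟩
  constructor
  · intro hodd
    have hcop2 : IsCoprime (p : ℤ) 2 := by
      rw [Int.isCoprime_iff_gcd_eq_one]
      rcases hodd with ⟨k, hk⟩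
      subst hk
      simp [Int.gcd]
    have hdvda : (p : ℤ) ∣ a := hcop2.dvd_of_dvd_mul_left hdvd2a
    have hle : (p : ℤ) ≤ |a| := Int.le_of_dvd (abs_pos.mpr hne') ((dvd_abs _ _).mpr hdvda)
    have h2q : 2 * (q : ℤ) ≤ |a - b| := by nlinarith
    have : (q : ℤ) ≤ g := by linarith
    exact_mod_cast this
  · intro _
    have hle : (p : ℤ) ≤ |2 * a| := Int.le_of_dvd (abs_pos.mpr (mul_ne_zero two_ne_zero hne')) ((dvd_abs _ _).mpr hdvd2a)
    rw [abs_mul] at hle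
    simp at hle
    have hq' : (q : ℤ) ≤ |a - b| := by nlinarith
    have : (q : ℤ) ≤ 2 * g := by linarith
    exact_mod_cast this
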